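/- Let f(x) = Σ_k α_k T_k(x) be an ensemble regressor with weights satisfying Σ_k α_k = 1. Then for any input-label pair (x, y), the overall ensemble error (f(x) - y)² equals the weighted error Σ_k α_k (T_k(x) - y)² minus the diversity Σ_k α_k (T_k(x) - f(x))². -/

import Mathlib

/-!
Expanding `(a - y)² = (a - m)² + 2 (a - m)(m - y) + (m - y)²` around the weighted mean
`m = ∑ w a` and summing against weights with `∑ w = 1`, the cross term vanishes because the
weighted deviations from the mean cancel.
-/

open Finset

section WeightedMean

variable {ι R : Type*} [CommRing R] (s : Finset ι) {w : ι → R} (a : ι → R)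

theorem sum_mul_sub_weighted_mean_eq_zero (hw : ∑ i ∈ s, w i = 1) :
    ∑ i ∈ s, w i * (a i - ∑ j ∈ s, w j * a j) = 0 := by
  simp only [mul_sub, sum_sub_distrib, ← sum_mul, hw, one_mul, sub_self]

theorem sum_mul_sub_sq_eq_sq_add_sum_mul_sub_weighted_mean_sq (hw : ∑ i ∈ s, w i = 1) (y : R) :
    ∑ i ∈ s, w i * (a i - y) ^ 2 =
      (∑ j ∈ s, w j * a j - y) ^ 2 + ∑ i ∈ s, w i * (a i - ∑ j ∈ s, w j * a j) ^ 2 := by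
  have cancel := sum_mul_sub_weighted_mean_eq_zero s a hw
  set m := ∑ j ∈ s, w j * a j
  have expand : ∀ i, w i * (a i - y) ^ 2 =
      w i * (a i - m) ^ 2 + 2 * (m - y) * (w i * (a i - m)) + (m - y) ^ 2 * w i := fun i => by
    ring
  simp only [expand, sum_add_distrib, ← mul_sum, cancel, hw]
  ring

end WeightedMean

/-- Krogh–Vedelsby ambiguity decomposition: Err = Err̄ - Div. -/
theorem ambiguity_decomposition {ι X : Type*} [Fintype ι]
    (α : ι → ℝ) (T : ι → X → ℝ) (x : X) (y : ℝ)
    (hα : ∑ k, α k = 1)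
    (f : X → ℝ) (hf : ∀ z, f z = ∑ k, α k * T k z) :
    (f x - y) ^ 2 =
      (∑ k, α k * (T k x - y) ^ 2) - (∑ k, α k * (T k x - f x) ^ 2) := by
  rw [hf x, sum_mul_sub_sq_eq_sq_add_sum_mul_sub_weighted_mean_sq univ (fun k => T k x) hα y,
    add_sub_cancel_right]
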